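/- For n ≥ 0 and q ≥ 3, A_q(2^n, 2) ≥ 2^n. -/

import Mathlib

open Finset

/-- ℓ1 (Hamming) weight of a `q`-ary vector of length `n`. -/
def hw {n q : ℕ} (x : Fin n → Fin q) : ℕ := ∑ k, (x k : ℕ)

/-- `E_q(n,i)`: the set of `q`-ary vectors of length `n` and weight `i`. -/
def lev (q n i : ℕ) : Finset (Fin n → Fin q) := Finset.univ.filter (fun x => hw x = i)

/-- Coordinatewise domination `x ≤ y`. -/
def domLe {n q : ℕ} (x y : Fin n → Fin q) : Prop := ∀ k, (x k : ℕ) ≤ (y k : ℕ)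

instance {n q : ℕ} (x y : Fin n → Fin q) : Decidable (domLe x y) :=
  inferInstanceAs (Decidable (∀ k, (x k : ℕ) ≤ (y k : ℕ)))

/-- `Y` covers `E_q(n,i-1)`: every vector of weight `i-1` is dominated by some `y ∈ Y`. -/
def Covers (q n i : ℕ) (Y : Finset (Fin n → Fin q)) : Prop :=
  ∀ x ∈ lev q n (i - 1), ∃ y ∈ Y, domLe x y

/-- A codeword class at level `i`: a subset of `E_q(n,i)` covering `E_q(n,i-1)`. -/
def IsClass (q n i : ℕ) (Y : Finset (Fin n → Fin q)) : Prop :=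
  Y ⊆ lev q n i ∧ Covers q n i Y

/-- `A_q(n,i)`: the maximum number of pairwise disjoint codeword classes in `E_q(n,i)`. -/
noncomputable def A (q n i : ℕ) : ℕ :=
  sSup {m | ∃ 𝒴 : Finset (Finset (Fin n → Fin q)),
    (∀ Y ∈ 𝒴, IsClass q n i Y) ∧
    (𝒴 : Set (Finset (Fin n → Fin q))).Pairwise Disjoint ∧ 𝒴.card = m}

/-!
For `s ∈ ℤ/N` let `Y_s = {e_x + e_{s-x} : x ∈ ℤ/N}`: every coordinate lies in exactly one
of its pairs, and the "loops" `2 e_x` (when `2x = s`) are admissible because `q ≥ 3`. The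
moment `∑ k, v_k • k ∈ ℤ/N` of every member of `Y_s` is `s`, so the `N` classes `Y_s` are
pairwise disjoint. Hence `A_q(N,2) ≥ N` for every `N`, in particular for `N = 2^n`.
-/

open Function

lemma card_le_A {q n i : ℕ} {ι : Type*} [Fintype ι] {Y : ι → Finset (Fin n → Fin q)}
    (hY : ∀ a, IsClass q n i (Y a)) (hne : ∀ a, (Y a).Nonempty)
    (hdisj : Pairwise (Disjoint on Y)) : Fintype.card ι ≤ A q n i := by
  have hinj : Injective Y := by
    intro a b hab
    by_contra h
    have := hdisj h
    rw [onFun, hab, disjoint_self] at this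
    exact (hne b).ne_empty this
  refine le_csSup ⟨Fintype.card (Finset (Fin n → Fin q)), ?_⟩
    ⟨univ.map ⟨Y, hinj⟩, by simpa using hY, ?_, by simp⟩
  · rintro m ⟨𝒴, -, -, rfl⟩
    exact card_le_univ 𝒴
  · simpa using hdisj.range_pairwise

lemma domLe_of_hw_eq_one {N q : ℕ} {v w : Fin N → Fin q} {i : Fin N} (hv : hw v = 1)
    (hi : (v i : ℕ) ≠ 0) (hwi : 1 ≤ (w i : ℕ)) : domLe v w := by
  intro k
  by_cases hk : k = i
  · subst hk
    have : (v k : ℕ) ≤ hw v := single_le_sum (fun j _ => Nat.zero_le (v j : ℕ)) (mem_univ k)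
    omega
  · have : (v k : ℕ) + v i ≤ hw v :=
      add_le_sum (fun j _ => Nat.zero_le (v j : ℕ)) (mem_univ k) (mem_univ i) hk
    omega

section PairClasses

variable {N q : ℕ}

def pairVec (hq : 3 ≤ q) (x y : Fin N) : Fin N → Fin q := fun k =>
  ⟨(Pi.single x 1 : Fin N → ℕ) k + (Pi.single y 1 : Fin N → ℕ) k, by
    simp only [Pi.single_apply]; split_ifs <;> omega⟩

lemma hw_pairVec (hq : 3 ≤ q) (x y : Fin N) : hw (pairVec hq x y) = 2 := by
  simp [hw, pairVec, sum_add_distrib]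

def moment [NeZero N] (v : Fin N → Fin q) : Fin N := ∑ k, (v k : ℕ) • k

lemma moment_pairVec [NeZero N] (hq : 3 ≤ q) (x y : Fin N) : moment (pairVec hq x y) = x + y := by
  simp [moment, pairVec, add_smul, sum_add_distrib, Pi.single_apply, ite_smul]

def sumClass [NeZero N] (hq : 3 ≤ q) (s : Fin N) : Finset (Fin N → Fin q) :=
  univ.image fun x => pairVec hq x (s - x)

variable [NeZero N] (hq : 3 ≤ q)

lemma moment_eq_of_mem_sumClass {s : Fin N} {v : Fin N → Fin q} (hv : v ∈ sumClass hq s) :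
    moment v = s := by
  obtain ⟨x, -, rfl⟩ := mem_image.mp hv
  rw [moment_pairVec, add_sub_cancel]

lemma pairwise_disjoint_sumClass : Pairwise (Disjoint on (sumClass hq : Fin N → _)) :=
  fun _ _ hst => disjoint_left.mpr fun _ hs ht =>
    hst ((moment_eq_of_mem_sumClass hq hs).symm.trans (moment_eq_of_mem_sumClass hq ht))

lemma sumClass_nonempty (s : Fin N) : (sumClass hq s).Nonempty := univ_nonempty.image _

lemma isClass_sumClass (s : Fin N) : IsClass q N 2 (sumClass hq s) := by
  refine ⟨fun v hv => ?_, fun v hv => ?_⟩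
  · obtain ⟨x, -, rfl⟩ := mem_image.mp hv
    exact mem_filter.mpr ⟨mem_univ _, hw_pairVec hq x (s - x)⟩
  · have hv : hw v = 1 := (mem_filter.mp hv).2
    obtain ⟨i, -, hi⟩ := exists_ne_zero_of_sum_ne_zero (hv.trans_ne one_ne_zero)
    exact ⟨pairVec hq i (s - i), mem_image_of_mem _ (mem_univ i),
      domLe_of_hw_eq_one hv hi (by simp [pairVec])⟩

end PairClasses

theorem le_A_two {q : ℕ} (hq : 3 ≤ q) (N : ℕ) : N ≤ A q N 2 := by
  rcases N.eq_zero_or_pos with rfl | hN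
  · exact Nat.zero_le _
  have : NeZero N := ⟨hN.ne'⟩
  simpa using
    card_le_A (isClass_sumClass hq) (sumClass_nonempty hq) (pairwise_disjoint_sumClass hq)

/-- For n ≥ 0 and q ≥ 3, A_q(2^n,2) ≥ 2^n. -/
theorem stmt_13 (q n : ℕ) (hq : 3 ≤ q) : 2 ^ n ≤ A q (2 ^ n) 2 := le_A_two hq (2 ^ n)
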